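/- arXiv:2412.16565 — 5 statements merged into one kernel-verified Lean document; each statement's English description precedes it below -/
import Mathlib

section
/- Let Z ≥ 2 be an integer, let x₁ < 0, and let (Ω, μ) be a probability space with a measurable label map Y : Ω → {1,…,Z}. For a measurable classifier F : Ω → Δ_Z, define the pointwise loss ℓ(u, c) = L_NFL(‖q_c − u‖₁), the clean risk R(F) = ∫ ℓ(F(ω), Y(ω)) dμ(ω), and for a noise rate η the symmetric-noise risk R^η(F) = ∫ [(1−η)ℓ(F(ω), Y(ω)) + (η/(Z−1)) Σ_{j ≠ Y(ω)} ℓ(F(ω), j)] dμ(ω). If 0 ≤ η < (Z−1)/Z and F*, F : Ω → Δ_Z are measurable classifiers with R(F*) ≤ R(F), then R^η(F*) ≤ R^η(F); that is, the NFL loss is noise-tolerant to symmetric (uniform) label noise with noise rate η < (Z−1)/Z. -/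
open MeasureTheory Real Finset

/-- Negative fraction linear (NFL) loss with parameter `x1`. -/
noncomputable def LNFL (x1 x : ℝ) : ℝ := if x1 ≤ x then x / x1 ^ 2 - 1 / x1 else -(1 / x)

/-- Exponential linear (EL) loss with parameter `x2`. -/
noncomputable def LEL (x2 x : ℝ) : ℝ := if x2 ≤ x then Real.exp x2 * (x + 1 - x2) else Real.exp x

/-- The one-hot vector `q_c` for class `c`. -/
def onehot {Z : ℕ} (c : Fin Z) : Fin Z → ℝ := fun z => if z = c then 1 else 0

/-- The ℓ1 norm on `ℝ^Z`. -/
noncomputable def l1norm {Z : ℕ} (v : Fin Z → ℝ) : ℝ := ∑ z, |v z|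

/-- Membership in the probability simplex `Δ_Z`. -/
def inSimplex {Z : ℕ} (u : Fin Z → ℝ) : Prop := (∀ z, 0 ≤ u z) ∧ ∑ z, u z = 1

lemma l1_onehot {Z : ℕ} {u : Fin Z → ℝ} (hu : inSimplex u) (c : Fin Z) :
    l1norm (onehot c - u) = 2 * (1 - u c) := by
  have huc : u c ≤ 1 := by
    rw [← hu.2]
    exact Finset.single_le_sum (fun i _ => hu.1 i) (mem_univ c)
  have h1 : ∀ z, |onehot c z - u z| = if z = c then 1 - u c else u z := by
    intro z
    by_cases h : z = c
    · simp [onehot, h, abs_of_nonneg, sub_nonneg.2 huc]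
    · simp [onehot, h, abs_of_nonneg (hu.1 z)]
  unfold l1norm
  simp only [Pi.sub_apply, h1]
  rw [← Finset.add_sum_erase _ _ (mem_univ c), if_pos rfl,
    Finset.sum_congr rfl (fun z hz => if_neg (Finset.ne_of_mem_erase hz)),
    Finset.sum_erase_eq_sub (mem_univ c), hu.2]
  ring

lemma lnfl_onehot {Z : ℕ} {x1 : ℝ} (hx1 : x1 < 0) {u : Fin Z → ℝ} (hu : inSimplex u)
    (c : Fin Z) :
    LNFL x1 (l1norm (onehot c - u)) = 2 * (1 - u c) / x1 ^ 2 - 1 / x1 := by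
  have huc : u c ≤ 1 := by
    rw [← hu.2]
    exact Finset.single_le_sum (fun i _ => hu.1 i) (mem_univ c)
  rw [l1_onehot hu c, LNFL, if_pos (by nlinarith)]

lemma sum_lnfl {Z : ℕ} {x1 : ℝ} (hx1 : x1 < 0) {u : Fin Z → ℝ} (hu : inSimplex u) :
    ∑ j : Fin Z, LNFL x1 (l1norm (onehot j - u)) = 2 * ((Z : ℝ) - 1) / x1 ^ 2 - Z / x1 := by
  simp_rw [lnfl_onehot hx1 hu]
  have h : ∀ j : Fin Z, 2 * (1 - u j) / x1 ^ 2 - 1 / x1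
      = (2 / x1 ^ 2 - 1 / x1) - (2 / x1 ^ 2) * u j := fun j => by ring
  simp_rw [h]
  rw [Finset.sum_sub_distrib, Finset.sum_const, ← Finset.mul_sum, hu.2, Finset.card_univ,
    Fintype.card_fin, nsmul_eq_mul]
  ring

lemma sum_ne_lnfl {Z : ℕ} {x1 : ℝ} (hx1 : x1 < 0) {u : Fin Z → ℝ} (hu : inSimplex u)
    (c : Fin Z) :
    ∑ j ∈ Finset.univ.filter (· ≠ c), LNFL x1 (l1norm (onehot j - u))
      = (2 * ((Z : ℝ) - 1) / x1 ^ 2 - Z / x1) - LNFL x1 (l1norm (onehot c - u)) := by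
  rw [Finset.filter_ne', Finset.sum_erase_eq_sub (mem_univ c), sum_lnfl hx1 hu]

lemma integrable_lnfl {Z : ℕ} {x1 : ℝ} (hx1 : x1 < 0)
    {Ω : Type*} [MeasurableSpace Ω] (μ : Measure Ω) [IsProbabilityMeasure μ]
    (Y : Ω → Fin Z) (hY : Measurable Y)
    (G : Ω → Fin Z → ℝ) (hG : Measurable G) (hGS : ∀ ω, inSimplex (G ω)) :
    Integrable (fun ω => LNFL x1 (l1norm (onehot (Y ω) - G ω))) μ := by
  have hmeas : Measurable fun ω => G ω (Y ω) := by
    have : (fun ω => G ω (Y ω)) = fun ω => ∑ j : Fin Z, if Y ω = j then G ω j else 0 := by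
      funext ω
      rw [Finset.sum_ite_eq univ (Y ω) (G ω), if_pos (mem_univ _)]
    rw [this]
    refine Finset.measurable_sum _ fun j _ => Measurable.ite ?_ ((measurable_pi_apply j).comp hG)
      measurable_const
    exact hY (measurableSet_singleton j)
  have hbd : ∀ ω, G ω (Y ω) ∈ Set.Icc (0:ℝ) 1 := by
    intro ω
    refine ⟨(hGS ω).1 _, ?_⟩
    rw [← (hGS ω).2]
    exact Finset.single_le_sum (fun i _ => (hGS ω).1 i) (mem_univ _)
  have heq : (fun ω => LNFL x1 (l1norm (onehot (Y ω) - G ω)))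
      = fun ω => 2 * (1 - G ω (Y ω)) / x1 ^ 2 - 1 / x1 := by
    funext ω; exact lnfl_onehot hx1 (hGS ω) (Y ω)
  rw [heq]
  have hint : Integrable (fun ω => G ω (Y ω)) μ := by
    refine Integrable.mono' (integrable_const 1) hmeas.aestronglyMeasurable
      (Filter.Eventually.of_forall fun ω => ?_)
    have := hbd ω
    rw [Real.norm_eq_abs, abs_of_nonneg this.1]; exact this.2
  have : (fun ω => 2 * (1 - G ω (Y ω)) / x1 ^ 2 - 1 / x1)
      = fun ω => (2 / x1 ^ 2 - 1 / x1) - (2 / x1 ^ 2) * G ω (Y ω) := by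
    funext ω; ring
  rw [this]
  exact (integrable_const _).sub (hint.const_mul _)

lemma noisy_integral_eq {Z : ℕ} (hZ : 2 ≤ Z) {x1 : ℝ} (hx1 : x1 < 0)
    {Ω : Type*} [MeasurableSpace Ω] (μ : Measure Ω) [IsProbabilityMeasure μ]
    (Y : Ω → Fin Z) (hY : Measurable Y) (η : ℝ)
    (G : Ω → Fin Z → ℝ) (hG : Measurable G) (hGS : ∀ ω, inSimplex (G ω)) :
    (∫ ω, ((1 - η) * LNFL x1 (l1norm (onehot (Y ω) - G ω))
        + η / ((Z : ℝ) - 1) *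
          ∑ j ∈ Finset.univ.filter (· ≠ Y ω), LNFL x1 (l1norm (onehot j - G ω))) ∂μ)
    = (1 - η - η / ((Z : ℝ) - 1)) * (∫ ω, LNFL x1 (l1norm (onehot (Y ω) - G ω)) ∂μ)
      + η / ((Z : ℝ) - 1) * (2 * ((Z : ℝ) - 1) / x1 ^ 2 - Z / x1) := by
  have heq : ∀ ω, (1 - η) * LNFL x1 (l1norm (onehot (Y ω) - G ω))
        + η / ((Z : ℝ) - 1) *
          ∑ j ∈ Finset.univ.filter (· ≠ Y ω), LNFL x1 (l1norm (onehot j - G ω))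
      = (1 - η - η / ((Z : ℝ) - 1)) * LNFL x1 (l1norm (onehot (Y ω) - G ω))
        + η / ((Z : ℝ) - 1) * (2 * ((Z : ℝ) - 1) / x1 ^ 2 - Z / x1) := by
    intro ω
    rw [sum_ne_lnfl hx1 (hGS ω) (Y ω)]
    ring
  simp_rw [heq]
  have hint := integrable_lnfl hx1 μ Y hY G hG hGS
  rw [integral_add (hint.const_mul _) (integrable_const _), MeasureTheory.integral_const_mul,
    integral_const, probReal_univ]
  simp

/-- The NFL loss is noise-tolerant to symmetric (uniform) label noise with
noise rate `η < (Z-1)/Z`: a minimizer of the clean risk is a minimizer of the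
symmetric-noise risk. -/
theorem nfl_noise_tolerant {Z : ℕ} (hZ : 2 ≤ Z) {x1 : ℝ} (hx1 : x1 < 0)
    {Ω : Type*} [MeasurableSpace Ω] (μ : Measure Ω) [IsProbabilityMeasure μ]
    (Y : Ω → Fin Z) (hY : Measurable Y)
    {η : ℝ} (hη0 : 0 ≤ η) (hη : η < ((Z : ℝ) - 1) / Z)
    (Fstar F : Ω → Fin Z → ℝ) (hFstar : Measurable Fstar) (hF : Measurable F)
    (hFstarS : ∀ ω, inSimplex (Fstar ω)) (hFS : ∀ ω, inSimplex (F ω))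
    (hclean : (∫ ω, LNFL x1 (l1norm (onehot (Y ω) - Fstar ω)) ∂μ)
            ≤ ∫ ω, LNFL x1 (l1norm (onehot (Y ω) - F ω)) ∂μ) :
    (∫ ω, ((1 - η) * LNFL x1 (l1norm (onehot (Y ω) - Fstar ω))
        + η / ((Z : ℝ) - 1) *
          ∑ j ∈ Finset.univ.filter (· ≠ Y ω), LNFL x1 (l1norm (onehot j - Fstar ω))) ∂μ)
    ≤ ∫ ω, ((1 - η) * LNFL x1 (l1norm (onehot (Y ω) - F ω))
        + η / ((Z : ℝ) - 1) *
          ∑ j ∈ Finset.univ.filter (· ≠ Y ω), LNFL x1 (l1norm (onehot j - F ω))) ∂μ := by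
  rw [noisy_integral_eq hZ hx1 μ Y hY η Fstar hFstar hFstarS,
    noisy_integral_eq hZ hx1 μ Y hY η F hF hFS]
  have hZ1 : (2:ℝ) ≤ (Z:ℝ) := by exact_mod_cast hZ
  have ha : 0 ≤ 1 - η - η / ((Z : ℝ) - 1) := by
    have hZpos : (0:ℝ) < (Z:ℝ) := by linarith
    have hZ1pos : (0:ℝ) < (Z:ℝ) - 1 := by linarith
    rw [lt_div_iff₀ hZpos] at hη
    have h3 : η / ((Z:ℝ) - 1) * ((Z:ℝ) - 1) = η := div_mul_cancel₀ _ (ne_of_gt hZ1pos)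
    nlinarith [div_nonneg hη0 hZ1pos.le]
  exact add_le_add_left (mul_le_mul_of_nonneg_left hclean ha) _
end

section
/- Let Z ≥ 2 be an integer, let x₂ ≤ 0, and let (Ω, μ) be a probability space with a measurable label map Y : Ω → {1,…,Z}. For a measurable classifier F : Ω → Δ_Z, define the pointwise loss ℓ(u, c) = L_EL(‖q_c − u‖₁), the clean risk R(F) = ∫ ℓ(F(ω), Y(ω)) dμ(ω), and for a noise rate η the symmetric-noise risk R^η(F) = ∫ [(1−η)ℓ(F(ω), Y(ω)) + (η/(Z−1)) Σ_{j ≠ Y(ω)} ℓ(F(ω), j)] dμ(ω). If 0 ≤ η < (Z−1)/Z and F*, F : Ω → Δ_Z are measurable classifiers with R(F*) ≤ R(F), then R^η(F*) ≤ R^η(F); that is, the EL loss is noise-tolerant to symmetric (uniform) label noise with noise rate η < (Z−1)/Z. -/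
open MeasureTheory Real Finset

/-!
On the simplex, `‖q_c - u‖₁ = 2 - 2 u_c ≥ 0 ≥ x₂`, so only the linear branch of `L_EL` is ever
active and `ℓ(u, c) = e^{x₂} (3 - x₂ - 2 u_c)`. Summing over `c`, `Σ_j ℓ(u, j)` is the constant
`e^{x₂} (Z (3 - x₂) - 2)`, i.e. the loss is symmetric. Hence the noisy risk is the affine function
`R^η = (1 - η - η / (Z - 1)) R + const` of the clean risk, whose slope is nonnegative exactly when
`η ≤ (Z - 1) / Z`.
-/

namespace inSimplex

variable {Z : ℕ} {u : Fin Z → ℝ}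

lemma le_one (hu : inSimplex u) (c : Fin Z) : u c ≤ 1 :=
  hu.2 ▸ single_le_sum (fun i _ => hu.1 i) (mem_univ c)

lemma l1norm_onehot_sub (hu : inSimplex u) (c : Fin Z) :
    l1norm (onehot c - u) = 2 - 2 * u c := by
  have hterm : ∀ z, |onehot c z - u z| = onehot c z + u z - 2 * (onehot c z * u z) := by
    intro z
    by_cases h : z = c
    · subst h
      simp only [onehot, if_true, abs_of_nonneg (sub_nonneg.2 (hu.le_one z))]
      ring
    · simp [onehot, h, abs_of_nonneg (hu.1 z)]
  simp only [l1norm, Pi.sub_apply, hterm, sum_sub_distrib, sum_add_distrib, ← mul_sum, hu.2]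
  simp only [onehot, sum_ite_eq', mem_univ, if_true, ite_mul, one_mul, zero_mul]
  ring

end inSimplex

lemma LEL_of_le {x2 x : ℝ} (h : x2 ≤ x) : LEL x2 x = exp x2 * (x + 1 - x2) := if_pos h

noncomputable def elLoss (x2 : ℝ) {Z : ℕ} (u : Fin Z → ℝ) (c : Fin Z) : ℝ :=
  LEL x2 (l1norm (onehot c - u))

noncomputable def noisyLoss (x2 η : ℝ) {Z : ℕ} (u : Fin Z → ℝ) (c : Fin Z) : ℝ :=
  (1 - η) * elLoss x2 u c + η / ((Z : ℝ) - 1) * ∑ j ∈ univ.filter (· ≠ c), elLoss x2 u j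

section Loss

variable {x2 : ℝ} {Z : ℕ} {u : Fin Z → ℝ}

lemma elLoss_eq (hx2 : x2 ≤ 0) (hu : inSimplex u) (c : Fin Z) :
    elLoss x2 u c = exp x2 * (3 - x2 - 2 * u c) := by
  rw [elLoss, hu.l1norm_onehot_sub, LEL_of_le (by linarith [hu.le_one c])]
  ring

lemma sum_elLoss (hx2 : x2 ≤ 0) (hu : inSimplex u) :
    ∑ j, elLoss x2 u j = exp x2 * (Z * (3 - x2) - 2) := by
  simp only [elLoss_eq hx2 hu, ← mul_sum, sum_sub_distrib, sum_const, card_univ,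
    Fintype.card_fin, nsmul_eq_mul, hu.2]
  ring

lemma noisyLoss_eq (hx2 : x2 ≤ 0) (hu : inSimplex u) (η : ℝ) (c : Fin Z) :
    noisyLoss x2 η u c = (1 - η - η / ((Z : ℝ) - 1)) * elLoss x2 u c
      + η / ((Z : ℝ) - 1) * (exp x2 * (Z * (3 - x2) - 2)) := by
  rw [noisyLoss, filter_ne', sum_erase_eq_sub (mem_univ c), sum_elLoss hx2 hu]
  ring

end Loss

lemma measurable_apply_of_countable {Ω ι : Type*} [MeasurableSpace Ω] [MeasurableSpace ι]
    [Countable ι] [MeasurableSingletonClass ι] {G : Ω → ι → ℝ} {Y : Ω → ι}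
    (hG : Measurable G) (hY : Measurable Y) : Measurable fun ω => G ω (Y ω) :=
  (measurable_from_prod_countable_left (f := fun p : Ω × ι => G p.1 p.2)
    fun i => (measurable_pi_apply i).comp hG).comp (measurable_id.prodMk hY)

section Risk

variable {Ω : Type*} [MeasurableSpace Ω] {Z : ℕ}

noncomputable def cleanRisk (μ : Measure Ω) (x2 : ℝ) (Y : Ω → Fin Z) (G : Ω → Fin Z → ℝ) : ℝ :=
  ∫ ω, elLoss x2 (G ω) (Y ω) ∂μ

noncomputable def noisyRisk (μ : Measure Ω) (x2 η : ℝ) (Y : Ω → Fin Z) (G : Ω → Fin Z → ℝ) : ℝ :=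
  ∫ ω, noisyLoss x2 η (G ω) (Y ω) ∂μ

variable {μ : Measure Ω} {x2 : ℝ} {Y : Ω → Fin Z} {G : Ω → Fin Z → ℝ}

lemma integrable_elLoss [IsFiniteMeasure μ] (hx2 : x2 ≤ 0) (hY : Measurable Y)
    (hG : Measurable G) (hGS : ∀ ω, inSimplex (G ω)) :
    Integrable (fun ω => elLoss x2 (G ω) (Y ω)) μ := by
  simp only [elLoss_eq hx2 (hGS _)]
  refine .of_bound ((((measurable_apply_of_countable hG hY).const_mul 2).const_sub _).const_mul _
    |>.aestronglyMeasurable) (exp x2 * (3 - x2)) (.of_forall fun ω => ?_)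
  have h0 := (hGS ω).1 (Y ω)
  have h1 := (hGS ω).le_one (Y ω)
  rw [norm_of_nonneg (mul_nonneg (exp_pos x2).le (by linarith))]
  exact mul_le_mul_of_nonneg_left (by linarith) (exp_pos x2).le

lemma noisyRisk_eq [IsProbabilityMeasure μ] (hx2 : x2 ≤ 0) (hY : Measurable Y)
    (hG : Measurable G) (hGS : ∀ ω, inSimplex (G ω)) (η : ℝ) :
    noisyRisk μ x2 η Y G = (1 - η - η / ((Z : ℝ) - 1)) * cleanRisk μ x2 Y G
      + η / ((Z : ℝ) - 1) * (exp x2 * (Z * (3 - x2) - 2)) := by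
  simp only [noisyRisk, noisyLoss_eq hx2 (hGS _)]
  rw [integral_add ((integrable_elLoss hx2 hY hG hGS).const_mul _) (integrable_const _),
    integral_const_mul, integral_const, probReal_univ, one_smul, cleanRisk]

end Risk

lemma one_sub_sub_div_nonneg {n η : ℝ} (hn : 1 < n) (hη : η < (n - 1) / n) :
    0 ≤ 1 - η - η / (n - 1) := by
  have hn1 : 0 < n - 1 := by linarith
  have hηn : η * n < n - 1 := (lt_div_iff₀ (by linarith)).1 hη
  rw [show 1 - η - η / (n - 1) = (n - 1 - η * n) / (n - 1) by field_simp; ring]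
  exact div_nonneg (by linarith) hn1.le

theorem el_noise_tolerant_general {Z : ℕ} (hZ : 2 ≤ Z) {x2 : ℝ} (hx2 : x2 ≤ 0)
    {Ω : Type*} [MeasurableSpace Ω] (μ : Measure Ω) [IsProbabilityMeasure μ]
    (Y : Ω → Fin Z) (hY : Measurable Y)
    {η : ℝ} (hη : η < ((Z : ℝ) - 1) / Z)
    (Fstar F : Ω → Fin Z → ℝ) (hFstar : Measurable Fstar) (hF : Measurable F)
    (hFstarS : ∀ ω, inSimplex (Fstar ω)) (hFS : ∀ ω, inSimplex (F ω))
    (hclean : (∫ ω, LEL x2 (l1norm (onehot (Y ω) - Fstar ω)) ∂μ)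
            ≤ ∫ ω, LEL x2 (l1norm (onehot (Y ω) - F ω)) ∂μ) :
    (∫ ω, ((1 - η) * LEL x2 (l1norm (onehot (Y ω) - Fstar ω))
        + η / ((Z : ℝ) - 1) *
          ∑ j ∈ Finset.univ.filter (· ≠ Y ω), LEL x2 (l1norm (onehot j - Fstar ω))) ∂μ)
    ≤ ∫ ω, ((1 - η) * LEL x2 (l1norm (onehot (Y ω) - F ω))
        + η / ((Z : ℝ) - 1) *
          ∑ j ∈ Finset.univ.filter (· ≠ Y ω), LEL x2 (l1norm (onehot j - F ω))) ∂μ := by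
  change noisyRisk μ x2 η Y Fstar ≤ noisyRisk μ x2 η Y F
  change cleanRisk μ x2 Y Fstar ≤ cleanRisk μ x2 Y F at hclean
  rw [noisyRisk_eq hx2 hY hFstar hFstarS, noisyRisk_eq hx2 hY hF hFS]
  have hslope := one_sub_sub_div_nonneg (Nat.one_lt_cast.2 hZ) hη
  gcongr

/-- The EL loss is noise-tolerant to symmetric (uniform) label noise with
noise rate `η < (Z-1)/Z`: a minimizer of the clean risk is a minimizer of the
symmetric-noise risk. -/
theorem el_noise_tolerant {Z : ℕ} (hZ : 2 ≤ Z) {x2 : ℝ} (hx2 : x2 ≤ 0)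
    {Ω : Type*} [MeasurableSpace Ω] (μ : Measure Ω) [IsProbabilityMeasure μ]
    (Y : Ω → Fin Z) (hY : Measurable Y)
    {η : ℝ} (hη0 : 0 ≤ η) (hη : η < ((Z : ℝ) - 1) / Z)
    (Fstar F : Ω → Fin Z → ℝ) (hFstar : Measurable Fstar) (hF : Measurable F)
    (hFstarS : ∀ ω, inSimplex (Fstar ω)) (hFS : ∀ ω, inSimplex (F ω))
    (hclean : (∫ ω, LEL x2 (l1norm (onehot (Y ω) - Fstar ω)) ∂μ)
            ≤ ∫ ω, LEL x2 (l1norm (onehot (Y ω) - F ω)) ∂μ) :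
    (∫ ω, ((1 - η) * LEL x2 (l1norm (onehot (Y ω) - Fstar ω))
        + η / ((Z : ℝ) - 1) *
          ∑ j ∈ Finset.univ.filter (· ≠ Y ω), LEL x2 (l1norm (onehot j - Fstar ω))) ∂μ)
    ≤ ∫ ω, ((1 - η) * LEL x2 (l1norm (onehot (Y ω) - F ω))
        + η / ((Z : ℝ) - 1) *
          ∑ j ∈ Finset.univ.filter (· ≠ Y ω), LEL x2 (l1norm (onehot j - F ω))) ∂μ :=
  el_noise_tolerant_general hZ hx2 μ Y hY hη Fstar F hFstar hF hFstarS hFS hclean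
end

section
/- Let Z ≥ 2, let x₁ < 0, and let (Ω, μ) be a probability space with a measurable label map Y : Ω → {1,…,Z}. For any measurable classifier F : Ω → Δ_Z with pointwise loss ℓ(u, c) = L_NFL(‖q_c − u‖₁), clean risk R(F) = ∫ ℓ(F(ω), Y(ω)) dμ(ω), and noisy risk R^η(F) = ∫ [(1−η)ℓ(F(ω), Y(ω)) + (η/(Z−1)) Σ_{j ≠ Y(ω)} ℓ(F(ω), j)] dμ(ω), one has the decomposition R^η(F) = (1 − ηZ/(Z−1)) R(F) + (η/(Z−1)) · (2(Z−1) − Z x₁)/x₁². -/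
open MeasureTheory Real Finset

lemma l1norm_onehot_sub {Z : ℕ} (c : Fin Z) {u : Fin Z → ℝ} (hu : inSimplex u) :
    l1norm (onehot c - u) = 2 * (1 - u c) := by
  obtain ⟨h0, h1⟩ := hu
  have huc : u c ≤ 1 := by
    rw [← h1]
    exact Finset.single_le_sum (fun i _ => h0 i) (Finset.mem_univ c)
  unfold l1norm onehot
  simp only [Pi.sub_apply]
  rw [Finset.sum_eq_add_sum_sdiff_singleton_of_mem (Finset.mem_univ c)]
  have h2 : ∀ z ∈ Finset.univ \ {c}, |(if z = c then (1:ℝ) else 0) - u z| = u z := by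
    intro z hz
    simp only [Finset.mem_sdiff, Finset.mem_singleton] at hz
    rw [if_neg hz.2]
    rw [abs_of_nonpos (by linarith [h0 z])]; ring
  rw [Finset.sum_congr rfl h2]
  have h3 : ∑ z ∈ Finset.univ \ {c}, u z = 1 - u c := by
    have := Finset.sum_eq_add_sum_sdiff_singleton_of_mem (Finset.mem_univ c) u
    rw [h1] at this; linarith
  rw [h3]
  simp only [if_pos rfl, if_true]
  rw [abs_of_nonneg (by linarith)]
  ring

lemma LNFL_lin {x1 x : ℝ} (hx1 : x1 < 0) (hx : 0 ≤ x) :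
    LNFL x1 x = x / x1 ^ 2 - 1 / x1 := by
  unfold LNFL; rw [if_pos (by linarith)]

/-- Decomposition of the symmetric-noise risk under the NFL loss:
`R^η(F) = (1 - ηZ/(Z-1)) R(F) + (η/(Z-1)) · (2(Z-1) - Z x₁)/x₁²`. -/
theorem nfl_noisy_risk_decomposition {Z : ℕ} (hZ : 2 ≤ Z) {x1 : ℝ} (hx1 : x1 < 0)
    {Ω : Type*} [MeasurableSpace Ω] (μ : Measure Ω) [IsProbabilityMeasure μ]
    (Y : Ω → Fin Z) (hY : Measurable Y) (η : ℝ)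
    (F : Ω → Fin Z → ℝ) (hF : Measurable F) (hFS : ∀ ω, inSimplex (F ω)) :
    (∫ ω, ((1 - η) * LNFL x1 (l1norm (onehot (Y ω) - F ω))
        + η / ((Z : ℝ) - 1) *
          ∑ j ∈ Finset.univ.filter (· ≠ Y ω), LNFL x1 (l1norm (onehot j - F ω))) ∂μ)
    = (1 - η * Z / ((Z : ℝ) - 1)) * (∫ ω, LNFL x1 (l1norm (onehot (Y ω) - F ω)) ∂μ)
      + η / ((Z : ℝ) - 1) * ((2 * ((Z : ℝ) - 1) - Z * x1) / x1 ^ 2) := by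
  have hZ1 : (Z : ℝ) - 1 ≠ 0 := by
    have : (2 : ℝ) ≤ (Z : ℝ) := by exact_mod_cast hZ
    linarith
  have hx1ne : x1 ≠ 0 := ne_of_lt hx1
  set C : ℝ := (2 * ((Z : ℝ) - 1) - Z * x1) / x1 ^ 2 with hC
  set g : Ω → ℝ := fun ω => LNFL x1 (l1norm (onehot (Y ω) - F ω)) with hg
  -- bounds on F ω z
  have hFb : ∀ ω z, 0 ≤ F ω z ∧ F ω z ≤ 1 := by
    intro ω z
    obtain ⟨h0, h1⟩ := hFS ω
    refine ⟨h0 z, ?_⟩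
    rw [← h1]
    exact Finset.single_le_sum (fun i _ => h0 i) (Finset.mem_univ z)
  have hgval : ∀ ω, g ω = (2 - 2 * F ω (Y ω)) / x1 ^ 2 - 1 / x1 := by
    intro ω
    have h2 := l1norm_onehot_sub (Y ω) (hFS ω)
    simp only [hg]
    rw [h2, LNFL_lin hx1 (by linarith [(hFb ω (Y ω)).2])]
    ring_nf
  -- sum over j ≠ Y ω
  have hsum : ∀ ω, (∑ j ∈ Finset.univ.filter (· ≠ Y ω), LNFL x1 (l1norm (onehot j - F ω)))
      = C - g ω := by
    intro ω
    have hall : (∑ j : Fin Z, LNFL x1 (l1norm (onehot j - F ω))) = C := by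
      have : ∀ j : Fin Z, LNFL x1 (l1norm (onehot j - F ω))
          = (2 - 2 * F ω j) / x1 ^ 2 - 1 / x1 := by
        intro j
        rw [l1norm_onehot_sub j (hFS ω), LNFL_lin hx1 (by linarith [(hFb ω j).2])]
        ring_nf
      rw [Finset.sum_congr rfl (fun j _ => this j)]
      obtain ⟨_, h1⟩ := hFS ω
      have hs : (∑ j : Fin Z, (2 - 2 * F ω j)) = 2 * (Z : ℝ) - 2 := by
        rw [Finset.sum_sub_distrib, Finset.sum_const, ← Finset.mul_sum, h1]
        simp [Finset.card_univ, nsmul_eq_mul]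
        ring
      rw [Finset.sum_sub_distrib, ← Finset.sum_div, hs, Finset.sum_const,
        Finset.card_univ, Fintype.card_fin, nsmul_eq_mul, hC]
      field_simp <;> ring
    rw [Finset.filter_ne', Finset.sum_erase_eq_sub (Finset.mem_univ (Y ω)), hall]
  -- measurability and integrability of g
  have hmeas : Measurable g := by
    have hh : Measurable fun ω => F ω (Y ω) := by
      have : (fun ω => F ω (Y ω)) = fun ω => ∑ c : Fin Z, if Y ω = c then F ω c else 0 := by
        funext ω; rw [Finset.sum_ite_eq]; simp
      rw [this]
      exact Finset.measurable_sum _ (fun c _ =>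
        Measurable.ite (hY (MeasurableSet.singleton c)) ((measurable_pi_apply c).comp hF)
          measurable_const)
    have : g = fun ω => (2 - 2 * F ω (Y ω)) / x1 ^ 2 - 1 / x1 := funext hgval
    rw [this]
    exact ((measurable_const.sub (hh.const_mul 2)).div_const _).sub measurable_const
  have hint : Integrable g μ := by
    apply Integrable.mono' (integrable_const (2 / x1 ^ 2 + |1 / x1|))
      hmeas.aestronglyMeasurable
    filter_upwards with ω
    rw [hgval ω, Real.norm_eq_abs]
    have h0 := (hFb ω (Y ω)).1
    have h1 := (hFb ω (Y ω)).2
    have hx2 : (0:ℝ) < x1 ^ 2 := by positivity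
    rw [sub_eq_add_neg]
    refine (abs_add_le _ _).trans ?_
    rw [abs_neg]
    have hb : |(2 - 2 * F ω (Y ω)) / x1 ^ 2| ≤ 2 / x1 ^ 2 := by
      rw [abs_div, abs_of_nonneg (by linarith : (0:ℝ) ≤ 2 - 2 * F ω (Y ω)), abs_of_pos hx2]
      gcongr
      linarith
    linarith
  -- rewrite integrand
  have hintegrand : ∀ ω, (1 - η) * g ω + η / ((Z : ℝ) - 1) * (C - g ω)
      = (1 - η * Z / ((Z : ℝ) - 1)) * g ω + η / ((Z : ℝ) - 1) * C := by
    intro ω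
    field_simp
    ring
  calc (∫ ω, ((1 - η) * g ω + η / ((Z : ℝ) - 1) *
          ∑ j ∈ Finset.univ.filter (· ≠ Y ω), LNFL x1 (l1norm (onehot j - F ω))) ∂μ)
      = ∫ ω, ((1 - η * Z / ((Z : ℝ) - 1)) * g ω + η / ((Z : ℝ) - 1) * C) ∂μ := by
        congr 1; funext ω; rw [hsum ω, hintegrand ω]
    _ = (1 - η * Z / ((Z : ℝ) - 1)) * (∫ ω, g ω ∂μ) + η / ((Z : ℝ) - 1) * C := by
        rw [integral_add (hint.const_mul _) (integrable_const _), integral_const_mul,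
          integral_const]
        simp
end

section
/- Let Z ≥ 2, let x₂ ≤ 0, and let (Ω, μ) be a probability space with a measurable label map Y : Ω → {1,…,Z}. For any measurable classifier F : Ω → Δ_Z with pointwise loss ℓ(u, c) = L_EL(‖q_c − u‖₁), clean risk R(F) = ∫ ℓ(F(ω), Y(ω)) dμ(ω), and noisy risk R^η(F) = ∫ [(1−η)ℓ(F(ω), Y(ω)) + (η/(Z−1)) Σ_{j ≠ Y(ω)} ℓ(F(ω), j)] dμ(ω), one has the decomposition R^η(F) = (1 − ηZ/(Z−1)) R(F) + (η/(Z−1)) · (3Z − 2 − Z x₂) e^{x₂}. -/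
open MeasureTheory Real Finset

/-! On the simplex `‖q_c - u‖₁ = 2 (1 - u_c) ≥ 0 ≥ x₂`, so the EL loss is always on its linear
branch, and `∑_c ℓ(u, c) = (3Z - 2 - Z x₂) e^{x₂}` does not depend on `u`: the loss is symmetric.
The noisy integrand therefore only sees the clean loss, through
`∑_{j ≠ Y} ℓ(u, j) = ∑_c ℓ(u, c) - ℓ(u, Y)`, and is affine in it. -/

lemma inSimplex.le_one_s3 {Z : ℕ} {u : Fin Z → ℝ} (hu : inSimplex u) (c : Fin Z) : u c ≤ 1 :=
  hu.2 ▸ single_le_sum (fun i _ => hu.1 i) (mem_univ c)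

lemma LEL_l1norm_onehot_sub {Z : ℕ} {x2 : ℝ} (hx2 : x2 ≤ 0) (c : Fin Z) {u : Fin Z → ℝ}
    (hu : inSimplex u) :
    LEL x2 (l1norm (onehot c - u)) = exp x2 * (3 - x2 - 2 * u c) := by
  rw [l1norm_onehot_sub c hu, LEL, if_pos (by linarith [hu.le_one_s3 c])]
  ring

lemma sum_LEL_l1norm_onehot_sub {Z : ℕ} {x2 : ℝ} (hx2 : x2 ≤ 0) {u : Fin Z → ℝ}
    (hu : inSimplex u) :
    ∑ c, LEL x2 (l1norm (onehot c - u)) = (3 * (Z : ℝ) - 2 - Z * x2) * exp x2 := by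
  simp_rw [LEL_l1norm_onehot_sub hx2 _ hu]
  rw [← mul_sum, sum_sub_distrib, ← mul_sum, hu.2, sum_sub_distrib]
  simp only [sum_const, card_univ, Fintype.card_fin, nsmul_eq_mul, mul_one]
  ring

lemma noisy_mix_eq {ι : Type*} [Fintype ι] [DecidableEq ι] {K : ℝ} (hK : K ≠ 1) (η : ℝ)
    (ℓ : ι → ℝ) (y : ι) :
    (1 - η) * ℓ y + η / (K - 1) * ∑ j ∈ univ.filter (· ≠ y), ℓ j
      = (1 - η * K / (K - 1)) * ℓ y + η / (K - 1) * ∑ j, ℓ j := by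
  have hK1 : K - 1 ≠ 0 := sub_ne_zero.mpr hK
  rw [filter_ne', sum_erase_eq_sub (mem_univ y)]
  field_simp
  ring

lemma Measurable.apply_of_countable {Ω ι β : Type*} [MeasurableSpace Ω] [MeasurableSpace ι]
    [Countable ι] [MeasurableSingletonClass ι] [MeasurableSpace β] {F : Ω → ι → β}
    (hF : Measurable F) {Y : Ω → ι} (hY : Measurable Y) :
    Measurable fun ω => F ω (Y ω) :=
  (measurable_from_prod_countable_left (f := fun p : (ι → β) × ι => p.1 p.2)
    measurable_pi_apply).comp (hF.prodMk hY)

lemma integrable_LEL_l1norm_onehot_sub {Z : ℕ} {x2 : ℝ} (hx2 : x2 ≤ 0)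
    {Ω : Type*} [MeasurableSpace Ω] (μ : Measure Ω) [IsFiniteMeasure μ]
    {Y : Ω → Fin Z} (hY : Measurable Y) {F : Ω → Fin Z → ℝ} (hF : Measurable F)
    (hFS : ∀ ω, inSimplex (F ω)) :
    Integrable (fun ω => LEL x2 (l1norm (onehot (Y ω) - F ω))) μ := by
  have hFY : Integrable (fun ω => F ω (Y ω)) μ := by
    refine .of_bound (hF.apply_of_countable hY).aestronglyMeasurable 1 ?_
    filter_upwards with ω
    rw [Real.norm_eq_abs, abs_of_nonneg ((hFS ω).1 _)]
    exact (hFS ω).le_one_s3 _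
  simp_rw [LEL_l1norm_onehot_sub hx2 _ (hFS _)]
  exact ((integrable_const _).sub (hFY.const_mul 2)).const_mul _

/-- Decomposition of the symmetric-noise risk under the EL loss:
`R^η(F) = (1 - ηZ/(Z-1)) R(F) + (η/(Z-1)) · (3Z - 2 - Z x₂) e^{x₂}`. -/
theorem el_noisy_risk_decomposition {Z : ℕ} (hZ : 2 ≤ Z) {x2 : ℝ} (hx2 : x2 ≤ 0)
    {Ω : Type*} [MeasurableSpace Ω] (μ : Measure Ω) [IsProbabilityMeasure μ]
    (Y : Ω → Fin Z) (hY : Measurable Y) (η : ℝ)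
    (F : Ω → Fin Z → ℝ) (hF : Measurable F) (hFS : ∀ ω, inSimplex (F ω)) :
    (∫ ω, ((1 - η) * LEL x2 (l1norm (onehot (Y ω) - F ω))
        + η / ((Z : ℝ) - 1) *
          ∑ j ∈ Finset.univ.filter (· ≠ Y ω), LEL x2 (l1norm (onehot j - F ω))) ∂μ)
    = (1 - η * Z / ((Z : ℝ) - 1)) * (∫ ω, LEL x2 (l1norm (onehot (Y ω) - F ω)) ∂μ)
      + η / ((Z : ℝ) - 1) * ((3 * (Z : ℝ) - 2 - Z * x2) * Real.exp x2) := by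
  have hZ1 : (Z : ℝ) ≠ 1 := by
    have : (2 : ℝ) ≤ Z := by exact_mod_cast hZ
    linarith
  rw [integral_congr_ae (.of_forall fun ω =>
    noisy_mix_eq hZ1 η (fun j => LEL x2 (l1norm (onehot j - F ω))) (Y ω))]
  simp_rw [sum_LEL_l1norm_onehot_sub hx2 (hFS _)]
  rw [integral_add ((integrable_LEL_l1norm_onehot_sub hx2 μ hY hF hFS).const_mul _)
    (integrable_const _), integral_const_mul, integral_const, probReal_univ, one_smul]
end

section
/- Let Z ≥ 2 be an integer and C ∈ ℝ, let (Ω, μ) be a probability space with a measurable label map Y : Ω → {1,…,Z}, and let a : Ω → (ℝ^Z) be measurable and bounded with Σ_{j=1}^Z a(ω)_j = C for every ω (a(ω)_j representing the loss of a fixed classifier at input ω against label j). Define R(a) = ∫ a(ω)_{Y(ω)} dμ(ω) and R^η(a) = ∫ [(1−η) a(ω)_{Y(ω)} + (η/(Z−1)) Σ_{j ≠ Y(ω)} a(ω)_j] dμ(ω). Then R^η(a) = (1 − ηZ/(Z−1)) R(a) + ηC/(Z−1). -/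
open MeasureTheory Real Finset

/-- If the per-label losses `a ω` of a classifier sum to a constant `C`
(independent of `ω`), the symmetric-noise risk decomposes as
`R^η(a) = (1 - ηZ/(Z-1)) R(a) + ηC/(Z-1)`. -/
theorem constant_sum_noisy_risk_decomposition {Z : ℕ} (hZ : 2 ≤ Z) (C : ℝ)
    {Ω : Type*} [MeasurableSpace Ω] (μ : Measure Ω) [IsProbabilityMeasure μ]
    (Y : Ω → Fin Z) (hY : Measurable Y) (η : ℝ)
    (a : Ω → Fin Z → ℝ) (ha : Measurable a) (habd : ∃ M, ∀ ω j, |a ω j| ≤ M)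
    (hsum : ∀ ω, ∑ j, a ω j = C) :
    (∫ ω, ((1 - η) * a ω (Y ω)
        + η / ((Z : ℝ) - 1) * ∑ j ∈ Finset.univ.filter (· ≠ Y ω), a ω j) ∂μ)
    = (1 - η * Z / ((Z : ℝ) - 1)) * (∫ ω, a ω (Y ω) ∂μ) + η * C / ((Z : ℝ) - 1) := by
  have hZ1 : (Z : ℝ) - 1 ≠ 0 := by
    have : (2 : ℝ) ≤ (Z : ℝ) := by exact_mod_cast hZ
    linarith
  -- measurability of ω ↦ a ω (Y ω)
  have hmeas : Measurable fun ω => a ω (Y ω) := by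
    have heq : (fun ω => a ω (Y ω)) = fun ω => ∑ j, if Y ω = j then a ω j else 0 := by
      funext ω
      rw [Finset.sum_ite_eq (Finset.univ) (Y ω) (a ω)]
      simp
    rw [heq]
    exact Finset.measurable_sum _ fun j _ =>
      Measurable.ite (hY (MeasurableSet.singleton j)) ((measurable_pi_iff.mp ha) j)
        measurable_const
  obtain ⟨M, hM⟩ := habd
  have hint : Integrable (fun ω => a ω (Y ω)) μ := by
    refine ⟨hmeas.aestronglyMeasurable, ?_⟩
    exact HasFiniteIntegral.of_bounded (C := M)
      (Filter.Eventually.of_forall fun ω => by simpa [Real.norm_eq_abs] using hM ω (Y ω))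
  -- pointwise rewrite
  have hpt : ∀ ω, (1 - η) * a ω (Y ω)
      + η / ((Z : ℝ) - 1) * ∑ j ∈ Finset.univ.filter (· ≠ Y ω), a ω j
      = (1 - η * Z / ((Z : ℝ) - 1)) * a ω (Y ω) + η * C / ((Z : ℝ) - 1) := by
    intro ω
    have hsplit : ∑ j ∈ Finset.univ.filter (· ≠ Y ω), a ω j = C - a ω (Y ω) := by
      have := hsum ω
      have h2 : ∑ j, a ω j = a ω (Y ω) + ∑ j ∈ Finset.univ.filter (· ≠ Y ω), a ω j := by
        rw [← Finset.sum_filter_add_sum_filter_not Finset.univ (· = Y ω) (a ω)]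
        congr 1
        rw [Finset.filter_eq']
        simp
      rw [h2] at this
      linarith
    rw [hsplit]
    have hZc : (Z : ℝ) ≠ 1 := by intro h; apply hZ1; linarith
    field_simp
    ring
  simp_rw [hpt]
  rw [integral_add (hint.const_mul _) (integrable_const _), integral_const_mul,
    integral_const]
  simp
end
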